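/- Let G be a group with elements g₁,…,g₅ and integers t_{ijk} (1 ≤ i < j < k ≤ 5) satisfying the listed commutator relations, and assume t₁₂₃·t₃₄₅ = 0. Set r(y) = y t₁₂₃, s(y) = y t₁₂₄ + s₂(y) t₁₂₃ t₁₃₄, and t(y) = y t₁₂₅ + s₂(y)(t₁₂₃ t₁₃₅ + t₁₂₄ t₁₄₅) + s₃(y) t₁₂₃ t₁₃₄ t₁₄₅. Then for every natural number x and every integer y: g₂^x g₁^y = g₁^y g₂^x g₃^{R(x,y)} g₄^{S(x,y)} g₅^{T(x,y)}, where R(x,y) = x y t₁₂₃, S(x,y) = x y t₁₂₄ + x s₂(y) t₁₂₃ t₁₃₄ + s₂(x) y t₁₂₃ t₂₃₄, and T(x,y) = x·t(y) + s₂(x)(r(y) t₂₃₅ + s(y) t₂₄₅ + r(y) s(y) t₃₄₅) + s₂(x)·r(y)·t₂₃₄·(t₂₄₅((2x−1) − 3) + t₃₄₅((4x+1)r(y) − 3))/6. -/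

import Mathlib

/-!
Put `a = g₃ ^ t₁₂₃`. Since `g₅` is central and `t₁₂₃ t₃₄₅ = 0` (so either `a = 1` or `g₃` commutes
with `g₄`), the elements `a, g₄, g₅` commute, and conjugation by `g₁` or `g₂` acts on the exponent
vectors `(i, j, k)` of `a ^ i g₄ ^ j g₅ ^ k` by a unipotent matrix. Iterating conjugation by `g₁`
gives `g₁ ^ (-y) g₂ g₁ ^ y = g₂ a ^ y g₄ ^ s(y) g₅ ^ t(y)`, and expanding the `x`-th power of this
element sums the iterates of conjugation by `g₂`, which produces the coefficients `s₂(x)`, `s₃(x)`.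
The `t₃₄₅` terms of `T(x, y)` vanish because `r(y) t₃₄₅ = 0`, and `s₂(x) (2x - 4) = 6 s₃(x)`.
-/
def s2 (x : ℤ) : ℤ := x * (x - 1) / 2
def s3 (x : ℤ) : ℤ := x * (x - 1) * (x - 2) / 6

lemma two_mul_s2 (x : ℤ) : 2 * s2 x = x * (x - 1) :=
  Int.mul_ediv_cancel' (Int.even_mul_pred_self x).two_dvd

lemma six_mul_s3 (x : ℤ) : 6 * s3 x = x * (x - 1) * (x - 2) := by
  refine Int.mul_ediv_cancel' ?_
  rw [Int.dvd_iff_emod_eq_zero, Int.mul_emod, Int.mul_emod x, Int.sub_emod, Int.sub_emod x 2]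
  have : 0 ≤ x % 6 := Int.emod_nonneg _ (by norm_num)
  have : x % 6 < 6 := Int.emod_lt_of_pos _ (by norm_num)
  interval_cases x % 6 <;> decide

lemma s2_add_one (x : ℤ) : s2 (x + 1) = s2 x + x :=
  mul_left_cancel₀ two_ne_zero <| by linear_combination two_mul_s2 (x + 1) - two_mul_s2 x

lemma s3_add_one (x : ℤ) : s3 (x + 1) = s3 x + s2 x :=
  mul_left_cancel₀ (by norm_num : (6 : ℤ) ≠ 0) <| by
    linear_combination six_mul_s3 (x + 1) - six_mul_s3 x - 3 * two_mul_s2 x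

lemma s2_mul_sub_four (x : ℤ) : s2 x * (2 * x - 4) = 6 * s3 x := by
  linear_combination (x - 2) * two_mul_s2 x - six_mul_s3 x

section Group

variable {G : Type*} [Group G]

lemma conj_eq_mul_of_commutator_eq {g x w : G} (h : x⁻¹ * g⁻¹ * x * g = w) :
    g⁻¹ * x * g = x * w := by
  rw [← h]; group

lemma commute_of_commutator_eq_one {g x : G} (h : x⁻¹ * g⁻¹ * x * g = 1) : Commute x g := by
  have := conj_eq_mul_of_commutator_eq h
  rw [mul_one, mul_assoc, inv_mul_eq_iff_eq_mul] at this
  exact this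

lemma conj_zpow_eq_of_conj_eq_add_one {g x : G} {F : ℤ → G} (h0 : F 0 = x)
    (hF : ∀ n, g⁻¹ * F n * g = F (n + 1)) (n : ℤ) : (g ^ n)⁻¹ * x * g ^ n = F n := by
  subst h0
  induction n using Int.induction_on with
  | zero => simp
  | succ n ih => rw [← hF, ← ih]; group
  | pred n ih =>
    have h := hF (-n - 1)
    rw [sub_add_cancel, ← ih] at h
    calc (g ^ (-(n : ℤ) - 1))⁻¹ * F 0 * g ^ (-(n : ℤ) - 1)
        = g * ((g ^ (-(n : ℤ)))⁻¹ * F 0 * g ^ (-(n : ℤ))) * g⁻¹ := by group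
      _ = F (-n - 1) := by rw [← h]; group

lemma mul_pow_eq_pow_mul_of_conj_mul_eq {g w : G} {H : ℕ → G} (h0 : H 0 = 1)
    (hH : ∀ n, g⁻¹ * H n * g * w = H (n + 1)) (n : ℕ) : (g * w) ^ n = g ^ n * H n := by
  induction n with
  | zero => simp [h0]
  | succ n ih => rw [pow_succ, ih, ← hH, pow_succ]; group

lemma zpow_mul_zpow_mul_zpow_mul_zpow_mul_zpow_mul_zpow {a b c : G} (hab : Commute a b)
    (hac : Commute a c) (hbc : Commute b c) (i j k i' j' k' : ℤ) :
    a ^ i * b ^ j * c ^ k * (a ^ i' * b ^ j' * c ^ k')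
      = a ^ (i + i') * b ^ (j + j') * c ^ (k + k') := by
  simp only [mul_assoc]
  rw [(hac.zpow_zpow i' k).symm.left_comm, (hab.zpow_zpow i' j).symm.left_comm,
    (hbc.zpow_zpow j' k).symm.left_comm]
  simp only [← mul_assoc, ← zpow_add]

structure IsUnitriangularConj (g a b c : G) (p q u : ℤ) : Prop where
  commute_ab : Commute a b
  commute_ac : Commute a c
  commute_bc : Commute b c
  conj_a : g⁻¹ * a * g = a * b ^ p * c ^ q
  conj_b : g⁻¹ * b * g = b * c ^ u
  conj_c : g⁻¹ * c * g = c

namespace IsUnitriangularConj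

variable {g a b c : G} {p q u : ℤ}

lemma conj_eq (T : IsUnitriangularConj g a b c p q u) (i j k : ℤ) :
    g⁻¹ * (a ^ i * b ^ j * c ^ k) * g = a ^ i * b ^ (j + p * i) * c ^ (k + q * i + u * j) := by
  have hconj : ∀ x, g⁻¹ * x * g = MulAut.conj g⁻¹ x := by simp
  rw [hconj, map_mul, map_mul, map_zpow, map_zpow, map_zpow, ← hconj, ← hconj, ← hconj,
    T.conj_a, T.conj_b, T.conj_c]
  have collect := zpow_mul_zpow_mul_zpow_mul_zpow_mul_zpow_mul_zpow T.commute_ab T.commute_ac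
    T.commute_bc
  rw [(T.commute_bc.zpow_right u).mul_zpow,
    ((T.commute_ac.zpow_right q).mul_left (T.commute_bc.zpow_zpow p q)).mul_zpow,
    (T.commute_ab.zpow_right p).mul_zpow, ← zpow_mul, ← zpow_mul, ← zpow_mul,
    show b ^ j * c ^ (u * j) = a ^ (0 : ℤ) * b ^ j * c ^ (u * j) by simp,
    show c ^ k = a ^ (0 : ℤ) * b ^ (0 : ℤ) * c ^ k by simp, collect, collect]
  ring_nf

lemma mul_pow_eq (T : IsUnitriangularConj g a b c p q u) (i j k : ℤ) (n : ℕ) :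
    (g * (a ^ i * b ^ j * c ^ k)) ^ n
      = g ^ n * (a ^ (n * i) * b ^ (n * j + s2 n * (p * i))
          * c ^ (n * k + s2 n * (q * i + u * j) + s3 n * (u * p * i))) := by
  apply mul_pow_eq_pow_mul_of_conj_mul_eq
  · simp [s2, s3]
  intro n
  rw [T.conj_eq, zpow_mul_zpow_mul_zpow_mul_zpow_mul_zpow_mul_zpow T.commute_ab T.commute_ac
    T.commute_bc, Nat.cast_succ, s2_add_one, s3_add_one]
  ring_nf

lemma conj_zpow_eq (T : IsUnitriangularConj g a b c p q u) {h : G} {i j k : ℤ}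
    (hh : g⁻¹ * h * g = h * (a ^ i * b ^ j * c ^ k)) (n : ℤ) :
    (g ^ n)⁻¹ * h * g ^ n
      = h * (a ^ (n * i) * b ^ (n * j + s2 n * (p * i))
          * c ^ (n * k + s2 n * (q * i + u * j) + s3 n * (u * p * i))) := by
  apply conj_zpow_eq_of_conj_eq_add_one
  · simp [s2, s3]
  intro n
  rw [show ∀ x, g⁻¹ * (h * x) * g = g⁻¹ * h * g * (g⁻¹ * x * g) from fun x => by group, hh,
    T.conj_eq, mul_assoc, zpow_mul_zpow_mul_zpow_mul_zpow_mul_zpow_mul_zpow T.commute_ab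
    T.commute_ac T.commute_bc, s2_add_one, s3_add_one]
  ring_nf

lemma of_commutators {g x b c : G} {n p q u : ℤ} (hxb : n = 0 ∨ Commute x b)
    (hxc : Commute x c) (hbc : Commute b c) (hx : x⁻¹ * g⁻¹ * x * g = b ^ p * c ^ q)
    (hb : b⁻¹ * g⁻¹ * b * g = c ^ u) (hc : c⁻¹ * g⁻¹ * c * g = 1) :
    IsUnitriangularConj g (x ^ n) b c (p * n) (q * n) u where
  commute_ab := by
    rcases hxb with rfl | hxb
    · simp
    · exact hxb.zpow_left n
  commute_ac := hxc.zpow_left n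
  commute_bc := hbc
  conj_a := by
    have hpow : (x * (b ^ p * c ^ q)) ^ n = x ^ n * (b ^ p * c ^ q) ^ n := by
      rcases hxb with rfl | hxb
      · simp
      · exact ((hxb.zpow_right p).mul_right (hxc.zpow_right q)).mul_zpow n
    have hconj : g⁻¹ * x ^ n * g = (g⁻¹ * x * g) ^ n := by
      simpa using (conj_zpow (a := g⁻¹) (b := x) (i := n)).symm
    rw [hconj, conj_eq_mul_of_commutator_eq hx, hpow,
      (hbc.zpow_zpow p q).mul_zpow, ← zpow_mul, ← zpow_mul, mul_assoc]
  conj_b := conj_eq_mul_of_commutator_eq hb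
  conj_c := by simpa using conj_eq_mul_of_commutator_eq hc

end IsUnitriangularConj
end Group

lemma s2_mul_mul_div_six_eq (x v w b c : ℤ) (hvc : v * c = 0) :
    s2 x * v * w * (b * ((2 * x - 1) - 3) + c * ((4 * x + 1) * v - 3)) / 6
      = s3 x * v * w * b := by
  rw [show s2 x * v * w * (b * ((2 * x - 1) - 3) + c * ((4 * x + 1) * v - 3))
      = 6 * (s3 x * v * w * b) by
    linear_combination v * w * b * s2_mul_sub_four x
      + s2 x * w * ((4 * x + 1) * v - 3) * hvc]
  exact Int.mul_ediv_cancel_left _ (by norm_num)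

/-- Commutation formula `g₂^x g₁^y = g₁^y g₂^x g₃^{R(x,y)} g₄^{S(x,y)} g₅^{T(x,y)}`
for natural `x` and integer `y`, assuming `t₁₂₃ t₃₄₅ = 0`. Here `r`, `s`, `t` are the
conjugation polynomials `r(y) = y t₁₂₃`, `s(y) = y t₁₂₄ + s₂(y) t₁₂₃ t₁₃₄`, and
`t(y) = y t₁₂₅ + s₂(y)(t₁₂₃ t₁₃₅ + t₁₂₄ t₁₄₅) + s₃(y) t₁₂₃ t₁₃₄ t₁₄₅`,
and the division by `6` in `T(x,y)` is exact. -/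
theorem g2_g1_power_commutation (G : Type*) [Group G] (g1 g2 g3 g4 g5 : G)
    (t123 t124 t125 t134 t135 t145 t234 t235 t245 t345 : ℤ)
    (h21 : g2⁻¹ * g1⁻¹ * g2 * g1 = g3 ^ t123 * g4 ^ t124 * g5 ^ t125)
    (h31 : g3⁻¹ * g1⁻¹ * g3 * g1 = g4 ^ t134 * g5 ^ t135)
    (h32 : g3⁻¹ * g2⁻¹ * g3 * g2 = g4 ^ t234 * g5 ^ t235)
    (h41 : g4⁻¹ * g1⁻¹ * g4 * g1 = g5 ^ t145)
    (h42 : g4⁻¹ * g2⁻¹ * g4 * g2 = g5 ^ t245)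
    (h43 : g4⁻¹ * g3⁻¹ * g4 * g3 = g5 ^ t345)
    (h51 : g5⁻¹ * g1⁻¹ * g5 * g1 = 1)
    (h52 : g5⁻¹ * g2⁻¹ * g5 * g2 = 1)
    (h53 : g5⁻¹ * g3⁻¹ * g5 * g3 = 1)
    (h54 : g5⁻¹ * g4⁻¹ * g5 * g4 = 1)
    (hcons : t123 * t345 = 0)
    (r s t : ℤ → ℤ)
    (hr : ∀ y, r y = y * t123)
    (hs : ∀ y, s y = y * t124 + s2 y * t123 * t134)
    (ht : ∀ y, t y = y * t125 + s2 y * (t123 * t135 + t124 * t145)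
                      + s3 y * t123 * t134 * t145) :
    ∀ (x : ℕ) (y : ℤ),
      g2 ^ x * g1 ^ y
        = g1 ^ y * g2 ^ x * g3 ^ ((x : ℤ) * y * t123)
            * g4 ^ ((x : ℤ) * y * t124 + (x : ℤ) * s2 y * t123 * t134
                    + s2 (x : ℤ) * y * t123 * t234)
            * g5 ^ ((x : ℤ) * t y
                    + s2 (x : ℤ) * (r y * t235 + s y * t245 + r y * s y * t345)
                    + s2 (x : ℤ) * r y * t234
                        * (t245 * ((2 * (x : ℤ) - 1) - 3)
                           + t345 * ((4 * (x : ℤ) + 1) * r y - 3)) / 6) := by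
  have c35 : Commute g3 g5 := (commute_of_commutator_eq_one h53).symm
  have c45 : Commute g4 g5 := (commute_of_commutator_eq_one h54).symm
  have h34 : t123 = 0 ∨ Commute g3 g4 := (mul_eq_zero.1 hcons).imp_right fun h =>
    (commute_of_commutator_eq_one (by rw [h43, h, zpow_zero])).symm
  have T1 := IsUnitriangularConj.of_commutators h34 c35 c45 h31 h41 h51
  have T2 := IsUnitriangularConj.of_commutators h34 c35 c45 h32 h42 h52
  have h21' : g1⁻¹ * g2 * g1 = g2 * ((g3 ^ t123) ^ (1 : ℤ) * g4 ^ t124 * g5 ^ t125) := by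
    rw [zpow_one, conj_eq_mul_of_commutator_eq h21]
  intro x y
  have hrc : r y * t345 = 0 := by rw [hr, mul_assoc, hcons, mul_zero]
  have hconj : ((g1 ^ y)⁻¹ * g2 * g1 ^ y) ^ x = (g1 ^ y)⁻¹ * g2 ^ x * g1 ^ y := by
    simpa using conj_pow (a := (g1 ^ y)⁻¹) (b := g2) (i := x)
  calc g2 ^ x * g1 ^ y = g1 ^ y * ((g1 ^ y)⁻¹ * g2 * g1 ^ y) ^ x := by rw [hconj]; group
    _ = _ := by
      rw [T1.conj_zpow_eq h21' y, T2.mul_pow_eq,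
        s2_mul_mul_div_six_eq _ _ _ _ _ hrc, mul_right_comm (r y), hrc, zero_mul, add_zero,
        hr, hs, ht]
      simp only [mul_assoc, ← zpow_mul]
      ring_nf
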